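/- Every chain C with respect to an alignment between P_hld(F) and P_hld(G) is finite and its last node C[|C|-1] is a partially deleted node, i.e., exactly one of its opening or closing parentheses is deleted by the alignment. -/

import Mathlib

/-- Rooted ordered labeled trees. -/
inductive LTree (α : Type) : Type where
  | node : α → List (LTree α) → LTree α

mutual
  /-- Number of nodes of a labeled tree. -/
  def tsize {α : Type} : LTree α → ℕ
    | .node _ ts => 1 + fsize ts
  /-- Number of nodes of a labeled forest. -/
  def fsize {α : Type} : List (LTree α) → ℕ
    | [] => 0
    | t :: ts => tsize t + fsize ts
end

mutual
  /-- Parenthesis representation of a tree: `(_a · str(children) · )_a`. -/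
  def pstr {α : Type} : LTree α → List (Bool × α)
    | .node a ts => (true, a) :: (pforest ts ++ [(false, a)])
  /-- Parenthesis representation of a forest. -/
  def pforest {α : Type} : List (LTree α) → List (Bool × α)
    | [] => []
    | t :: ts => pstr t ++ pforest ts
end

mutual
  /-- The pair `(o(u), c(u))` of positions, in the parenthesis representation,
  of the node `u` of a tree addressed by a list of child indices. -/
  def tpos {α : Type} : LTree α → List ℕ → Option (ℕ × ℕ)
    | t, [] => some (0, (pstr t).length - 1)
    | .node _ ts, k :: addr => (fpos ts (k :: addr)).map (fun p => (p.1 + 1, p.2 + 1))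
  /-- The pair `(o(u), c(u))` of positions of the node of a forest addressed by a
  nonempty list of child indices (the first index selects the tree). -/
  def fpos {α : Type} : List (LTree α) → List ℕ → Option (ℕ × ℕ)
    | [], _ => none
    | _ :: _, [] => none
    | t :: _, 0 :: addr => tpos t addr
    | t :: ts, (k + 1) :: addr =>
        (fpos ts (k :: addr)).map (fun p => (p.1 + (pstr t).length, p.2 + (pstr t).length))
end

mutual
  /-- The subtree of a tree at a given address. -/
  def tSub {α : Type} : LTree α → List ℕ → Option (LTree α)
    | t, [] => some t
    | .node _ ts, k :: addr => fSub ts (k :: addr)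
  /-- The subtree of a forest at a given (nonempty) address. -/
  def fSub {α : Type} : List (LTree α) → List ℕ → Option (LTree α)
    | [], _ => none
    | _ :: _, [] => none
    | t :: _, 0 :: addr => tSub t addr
    | _ :: ts, (k + 1) :: addr => fSub ts (k :: addr)
end

mutual
  /-- Embed a tree into trees labeled by `Option α` (no sentinels). -/
  def emb {α : Type} : LTree α → LTree (Option α)
    | .node a ts => .node (some a) (femb ts)
  def femb {α : Type} : List (LTree α) → List (LTree (Option α))
    | [] => []
    | t :: ts => emb t :: femb ts
end

/-- Replace each heavy child (heavy depth `n` equal to the parent's) by a sentinel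
node labeled `none`; keep light children verbatim. -/
def lightChildren {α : Type} (n : ℕ) : List (LTree α) → List (LTree (Option α))
  | [] => []
  | t :: ts =>
      (if Nat.log 2 (tsize t) = n then LTree.node none [] else emb t) ::
        lightChildren n ts

/-- The light subtree `F'(v)` : the subtree rooted at `v` with the subtree of its
heavy child (if any) replaced by a single sentinel node. -/
def lightSub {α : Type} : LTree α → LTree (Option α)
  | .node a ts => .node (some a) (lightChildren (Nat.log 2 (1 + fsize ts)) ts)

mutual
  /-- The modified (heavy-light) labeling: each node `v` is relabeled by the pair
  `(F'(v), heavy depth of F(v))`. -/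
  def hldTree {α : Type} : LTree α → LTree (LTree (Option α) × ℕ)
    | .node a ts =>
        .node (lightSub (.node a ts), Nat.log 2 (1 + fsize ts)) (hldForest ts)
  /-- The modified labeling of a forest. -/
  def hldForest {α : Type} : List (LTree α) → List (LTree (LTree (Option α) × ℕ))
    | [] => []
    | t :: ts => hldTree t :: hldForest ts
end

/-- Default chain entry. -/
def d0 : Bool × List ℕ := (true, [])

/-- A chain entry: a node of `F` (side `true`) or of `G` (side `false`),
given by its address. -/
abbrev Entry := Bool × List ℕ

/-- The positions `(o(u), c(u))` of the node represented by an entry, in the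
parenthesis representation of its own forest. -/
def posOf {β : Type} (HF HG : List (LTree β)) (e : Entry) : ℕ × ℕ :=
  (fpos (if e.1 then HF else HG) e.2).getD (0, 0)

/-- `i` (a position of `str(HF)`) and `j` (a position of `str(HG)`) are matched by
the alignment `M` : the pair is aligned and the two characters are equal. -/
def MatchedEq {β : Type} (HF HG : List (LTree β)) (M : List (ℕ × ℕ))
    (dflt : Bool × β) (i j : ℕ) : Prop :=
  (i, j) ∈ M ∧ (pforest HF).getD i dflt = (pforest HG).getD j dflt

/-- Condition of an opening chain: each `F`-side node matches its opening
parenthesis with the next node of the sequence and its closing parenthesis with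
the previous one. -/
def OpeningChainCond {β : Type} (HF HG : List (LTree β)) (M : List (ℕ × ℕ))
    (dflt : Bool × β) (C : List Entry) : Prop :=
  ∀ k, k < C.length → (C.getD k d0).1 = true →
    (k + 1 < C.length →
      MatchedEq HF HG M dflt (posOf HF HG (C.getD k d0)).1
        (posOf HF HG (C.getD (k + 1) d0)).1) ∧
    (0 < k →
      MatchedEq HF HG M dflt (posOf HF HG (C.getD k d0)).2
        (posOf HF HG (C.getD (k - 1) d0)).2)

/-- Condition of a closing chain: each `F`-side node matches its closing
parenthesis with the next node of the sequence and its opening parenthesis with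
the previous one. -/
def ClosingChainCond {β : Type} (HF HG : List (LTree β)) (M : List (ℕ × ℕ))
    (dflt : Bool × β) (C : List Entry) : Prop :=
  ∀ k, k < C.length → (C.getD k d0).1 = true →
    (k + 1 < C.length →
      MatchedEq HF HG M dflt (posOf HF HG (C.getD k d0)).2
        (posOf HF HG (C.getD (k + 1) d0)).2) ∧
    (0 < k →
      MatchedEq HF HG M dflt (posOf HF HG (C.getD k d0)).1
        (posOf HF HG (C.getD (k - 1) d0)).1)

/-- Core conditions of an extended chain (without maximality): at least three
nodes, valid addresses, alternation between the two forests, and the opening or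
closing matching conditions. -/
def ExtChainCore {β : Type} (HF HG : List (LTree β)) (M : List (ℕ × ℕ))
    (dflt : Bool × β) (C : List Entry) : Prop :=
  3 ≤ C.length ∧
  (∀ e ∈ C, (fpos (if e.1 then HF else HG) e.2).isSome = true) ∧
  (∀ k, k + 1 < C.length → (C.getD k d0).1 ≠ (C.getD (k + 1) d0).1) ∧
  (OpeningChainCond HF HG M dflt C ∨ ClosingChainCond HF HG M dflt C)

/-- The ancestor condition of a chain: `C[k]` is a proper ancestor of `C[k+2]`
(its address is a proper prefix of the address of `C[k+2]`). -/
def AncestorCond (C : List Entry) : Prop :=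
  ∀ k, k + 2 < C.length →
    (C.getD k d0).2 <+: (C.getD (k + 2) d0).2 ∧
      (C.getD k d0).2 ≠ (C.getD (k + 2) d0).2

/-- Core conditions of a chain (without maximality). -/
def ChainCore {β : Type} (HF HG : List (LTree β)) (M : List (ℕ × ℕ))
    (dflt : Bool × β) (C : List Entry) : Prop :=
  ExtChainCore HF HG M dflt C ∧ AncestorCond C

/-- A (maximal) chain: a maximal sequence satisfying the chain conditions. -/
def MaxChain {β : Type} (HF HG : List (LTree β)) (M : List (ℕ × ℕ))
    (dflt : Bool × β) (C : List Entry) : Prop :=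
  ChainCore HF HG M dflt C ∧
    (¬∃ e, ChainCore HF HG M dflt (C ++ [e])) ∧
    (¬∃ e, ChainCore HF HG M dflt (e :: C))

/-- An extended chain: an inclusion-wise maximal sequence satisfying the extended
chain conditions. -/
def MaxExtChain {β : Type} (HF HG : List (LTree β)) (M : List (ℕ × ℕ))
    (dflt : Bool × β) (C : List Entry) : Prop :=
  ExtChainCore HF HG M dflt C ∧
    (¬∃ e, ExtChainCore HF HG M dflt (C ++ [e])) ∧
    (¬∃ e, ExtChainCore HF HG M dflt (e :: C))

/-- The label of the root of a labeled tree. -/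
def treeLabel {β : Type} : LTree β → β
  | .node b _ => b

/-- Default character of a modified parenthesis representation. -/
def hldDflt (α : Type) : Bool × (LTree (Option α) × ℕ) :=
  (true, (LTree.node none [], 0))

/-- A monotone matching: index pairs strictly increasing in both coordinates. -/
def IsMatching (M : List (ℕ × ℕ)) : Prop :=
  M.Chain' (fun p q => p.1 < q.1 ∧ p.2 < q.2)

/-- A position `p` of the appropriate string is aligned by `M`
(`side = true` : a position of the first string; `side = false` : of the second). -/
def AlignedAt (side : Bool) (M : List (ℕ × ℕ)) (p : ℕ) : Prop :=
  if side then (∃ j, (p, j) ∈ M) else (∃ i, (i, p) ∈ M)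

/-!
Let `t, u, w` be the last three nodes of a chain. Then `t` and `w` lie in the same forest, `t` is a
proper ancestor of `w`, and `u` is aligned with `t` through one kind of parenthesis and with `w`
through the other, so one parenthesis of `w` is aligned. Were the other one aligned with some
position `q`, monotonicity of the alignment would put `q` strictly inside `u`; as aligned
characters are equal, `q` is then a parenthesis of the same kind of a proper descendant `v` of `u`,
and appending `v` would extend the chain, contradicting maximality.
-/

-- As in the characters of `pstr`, `true` marks the opening and `false` the closing parenthesis.
def paren (b : Bool) (p : ℕ × ℕ) : ℕ := if b then p.1 else p.2

@[simp] theorem paren_true (p : ℕ × ℕ) : paren true p = p.1 := rfl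

@[simp] theorem paren_false (p : ℕ × ℕ) : paren false p = p.2 := rfl

theorem paren_shift (b : Bool) (o c n : ℕ) : paren b (o + n, c + n) = paren b (o, c) + n := by
  cases b <;> rfl

section Parentheses

variable {β : Type}

theorem pstr_node_length (a : β) (ts : List (LTree β)) :
    (pstr (.node a ts)).length = (pforest ts).length + 2 := by
  simp [pstr]

theorem pstr_node_getD_succ (a : β) (ts : List (LTree β)) (d : Bool × β) {p : ℕ}
    (hp : p < (pforest ts).length) :
    (pstr (.node a ts)).getD (p + 1) d = (pforest ts).getD p d := by
  simp only [pstr, List.getD_cons_succ]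
  exact List.getD_append _ _ _ _ hp

theorem pstr_node_getD_last (a : β) (ts : List (LTree β)) (d : Bool × β) :
    (pstr (.node a ts)).getD ((pforest ts).length + 1) d = (false, a) := by
  simp only [pstr, List.getD_cons_succ]
  rw [List.getD_append_right _ _ _ _ le_rfl]
  simp

theorem pforest_cons_getD_of_lt (t : LTree β) (ts : List (LTree β)) (d : Bool × β) {p : ℕ}
    (hp : p < (pstr t).length) :
    (pforest (t :: ts)).getD p d = (pstr t).getD p d :=
  List.getD_append _ _ _ _ hp

theorem pforest_cons_getD_add (t : LTree β) (ts : List (LTree β)) (d : Bool × β) (p : ℕ) :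
    (pforest (t :: ts)).getD (p + (pstr t).length) d = (pforest ts).getD p d := by
  simp only [pforest]
  rw [List.getD_append_right _ _ _ _ (by omega), Nat.add_sub_cancel]

theorem ne_nil_of_fpos_eq_some {ts : List (LTree β)} {a : List ℕ} {p : ℕ × ℕ}
    (h : fpos ts a = some p) : a ≠ [] := by
  rintro rfl
  cases ts <;> simp [fpos] at h

mutual

theorem tpos_spec {t : LTree β} {a : List ℕ} {o c : ℕ} (d : Bool × β)
    (h : tpos t a = some (o, c)) :
    o < c ∧ c < (pstr t).length ∧
      ((pstr t).getD o d).1 = true ∧ ((pstr t).getD c d).1 = false := by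
  obtain ⟨lbl, ts⟩ := t
  rw [pstr_node_length]
  match a, h with
  | [], h =>
    simp only [tpos, pstr_node_length, Option.some.injEq, Prod.mk.injEq] at h
    obtain ⟨rfl, rfl⟩ := h
    refine ⟨by omega, by omega, by simp [pstr], ?_⟩
    rw [show (pforest ts).length + 2 - 1 = (pforest ts).length + 1 from rfl,
      pstr_node_getD_last]
  | k :: rest, h =>
    simp only [tpos, Option.map_eq_some_iff, Prod.mk.injEq] at h
    obtain ⟨⟨o', c'⟩, hf, rfl, rfl⟩ := h
    obtain ⟨hoc, hc, ho, hc'⟩ := fpos_spec d hf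
    refine ⟨by omega, by omega, ?_, ?_⟩
    · rwa [pstr_node_getD_succ _ _ _ (by omega)]
    · rwa [pstr_node_getD_succ _ _ _ hc]

theorem fpos_spec {ts : List (LTree β)} {a : List ℕ} {o c : ℕ} (d : Bool × β)
    (h : fpos ts a = some (o, c)) :
    o < c ∧ c < (pforest ts).length ∧
      ((pforest ts).getD o d).1 = true ∧ ((pforest ts).getD c d).1 = false := by
  match ts, a, h with
  | t :: ts, 0 :: rest, h =>
    obtain ⟨hoc, hc, ho, hc'⟩ := tpos_spec d h
    refine ⟨hoc, by simp [pforest]; omega, ?_, ?_⟩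
    · rwa [pforest_cons_getD_of_lt _ _ _ (by omega)]
    · rwa [pforest_cons_getD_of_lt _ _ _ hc]
  | t :: ts, (k + 1) :: rest, h =>
    simp only [fpos, Option.map_eq_some_iff, Prod.mk.injEq] at h
    obtain ⟨⟨o', c'⟩, hf, rfl, rfl⟩ := h
    obtain ⟨hoc, hc, ho, hc'⟩ := fpos_spec d hf
    refine ⟨by omega, by simp [pforest]; omega, ?_, ?_⟩
    · rwa [pforest_cons_getD_add]
    · rwa [pforest_cons_getD_add]

end

theorem fpos_getD_paren {ts : List (LTree β)} {a : List ℕ} {p : ℕ × ℕ} (d : Bool × β)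
    (h : fpos ts a = some p) (b : Bool) : ((pforest ts).getD (paren b p) d).1 = b := by
  obtain ⟨-, -, ho, hc⟩ := fpos_spec d h
  cases b <;> assumption

mutual

theorem exists_tpos_paren (t : LTree β) (d : Bool × β) {p : ℕ} (hp : p < (pstr t).length) :
    ∃ a q, tpos t a = some q ∧ paren ((pstr t).getD p d).1 q = p := by
  obtain ⟨lbl, ts⟩ := t
  rw [pstr_node_length] at hp
  by_cases h0 : p = 0
  · exact ⟨[], _, rfl, by simp [h0, pstr]⟩
  by_cases hlast : p = (pforest ts).length + 1
  · refine ⟨[], _, rfl, ?_⟩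
    rw [hlast, pstr_node_getD_last]
    simp [pstr_node_length]
  obtain ⟨p, rfl⟩ := Nat.exists_eq_succ_of_ne_zero h0
  obtain ⟨a, ⟨o, c⟩, ha, hq⟩ := exists_fpos_paren ts d (p := p) (by omega)
  obtain ⟨k, rest, rfl⟩ := List.exists_cons_of_ne_nil (ne_nil_of_fpos_eq_some ha)
  refine ⟨k :: rest, (o + 1, c + 1), by simp [tpos, ha], ?_⟩
  rw [pstr_node_getD_succ _ _ _ (by omega), paren_shift, hq]

theorem exists_fpos_paren (ts : List (LTree β)) (d : Bool × β) {p : ℕ}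
    (hp : p < (pforest ts).length) :
    ∃ a q, fpos ts a = some q ∧ paren ((pforest ts).getD p d).1 q = p := by
  match ts with
  | t :: ts =>
    by_cases hpt : p < (pstr t).length
    · obtain ⟨a, q, ha, hq⟩ := exists_tpos_paren t d hpt
      exact ⟨0 :: a, q, ha, by rwa [pforest_cons_getD_of_lt _ _ _ hpt]⟩
    obtain ⟨p, rfl⟩ := Nat.exists_eq_add_of_le' (not_lt.1 hpt)
    obtain ⟨a, ⟨o, c⟩, ha, hq⟩ :=
      exists_fpos_paren ts d (p := p) (by simp [pforest] at hp; omega)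
    obtain ⟨k, rest, rfl⟩ := List.exists_cons_of_ne_nil (ne_nil_of_fpos_eq_some ha)
    refine ⟨(k + 1) :: rest, (o + (pstr t).length, c + (pstr t).length),
      by simp [fpos, ha], ?_⟩
    rw [pforest_cons_getD_add, paren_shift, hq]

end

end Parentheses

section Nesting

variable {β : Type}

theorem tpos_nil_eq (t : LTree β) : tpos t [] = some (0, (pstr t).length - 1) := by
  cases t; rfl

theorem tpos_node_cons {a : β} {ts : List (LTree β)} {k : ℕ} {rest : List ℕ} {o c : ℕ}
    (h : tpos (.node a ts) (k :: rest) = some (o, c)) :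
    ∃ o' c', fpos ts (k :: rest) = some (o', c') ∧ o = o' + 1 ∧ c = c' + 1 := by
  simp only [tpos, Option.map_eq_some_iff, Prod.mk.injEq] at h
  obtain ⟨⟨o', c'⟩, hf, rfl, rfl⟩ := h
  exact ⟨o', c', hf, rfl, rfl⟩

theorem fpos_cons_succ {t : LTree β} {ts : List (LTree β)} {k : ℕ} {rest : List ℕ} {o c : ℕ}
    (h : fpos (t :: ts) ((k + 1) :: rest) = some (o, c)) :
    ∃ o' c', fpos ts (k :: rest) = some (o', c') ∧
      o = o' + (pstr t).length ∧ c = c' + (pstr t).length := by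
  simp only [fpos, Option.map_eq_some_iff, Prod.mk.injEq] at h
  obtain ⟨⟨o', c'⟩, hf, rfl, rfl⟩ := h
  exact ⟨o', c', hf, rfl, rfl⟩

mutual

theorem tpos_lt_of_prefix {t : LTree β} {a b : List ℕ} {oa ca ob cb : ℕ}
    (ha : tpos t a = some (oa, ca)) (hb : tpos t b = some (ob, cb))
    (hab : a <+: b) (hne : a ≠ b) : oa < ob ∧ cb < ca := by
  obtain ⟨lbl, ts⟩ := t
  match a, b, hab with
  | [], [], _ => exact absurd rfl hne
  | [], k :: rest, _ =>
    simp only [tpos_nil_eq, pstr_node_length, Option.some.injEq, Prod.mk.injEq] at ha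
    obtain ⟨o', c', hf, rfl, rfl⟩ := tpos_node_cons hb
    have := (fpos_spec (true, lbl) hf).2.1
    omega
  | k :: ra, k' :: rb, hab =>
    obtain ⟨oa', ca', hfa, rfl, rfl⟩ := tpos_node_cons ha
    obtain ⟨ob', cb', hfb, rfl, rfl⟩ := tpos_node_cons hb
    have := fpos_lt_of_prefix hfa hfb hab hne
    omega

theorem fpos_lt_of_prefix {ts : List (LTree β)} {a b : List ℕ} {oa ca ob cb : ℕ}
    (ha : fpos ts a = some (oa, ca)) (hb : fpos ts b = some (ob, cb))
    (hab : a <+: b) (hne : a ≠ b) : oa < ob ∧ cb < ca := by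
  match ts, a, b, hab with
  | t :: ts, 0 :: ra, 0 :: rb, hab =>
    exact tpos_lt_of_prefix ha hb (List.cons_prefix_cons.1 hab).2 (by simpa using hne)
  | t :: ts, (k + 1) :: ra, (k' + 1) :: rb, hab =>
    obtain rfl : k = k' := by simpa using (List.cons_prefix_cons.1 hab).1
    obtain ⟨oa', ca', hfa, rfl, rfl⟩ := fpos_cons_succ ha
    obtain ⟨ob', cb', hfb, rfl, rfl⟩ := fpos_cons_succ hb
    have := fpos_lt_of_prefix hfa hfb
      (List.cons_prefix_cons.2 ⟨rfl, (List.cons_prefix_cons.1 hab).2⟩) (by simpa using hne)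
    omega
  | [], _, _, _ => simp [fpos] at ha
  | _ :: _, [], _, _ => simp [fpos] at ha
  | _ :: _, _ :: _, [], hab => simp at hab
  | _ :: _, 0 :: _, (_ + 1) :: _, hab => simp at hab
  | _ :: _, (_ + 1) :: _, 0 :: _, hab => simp at hab

end

mutual

theorem tpos_prefix_of_nested {t : LTree β} {a b : List ℕ} {oa ca ob cb : ℕ}
    (ha : tpos t a = some (oa, ca)) (hb : tpos t b = some (ob, cb))
    (h : oa < ob ∧ ob < ca ∨ oa < cb ∧ cb < ca) : a <+: b ∧ a ≠ b := by
  obtain ⟨lbl, ts⟩ := t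
  match a, b with
  | [], [] =>
    simp only [tpos_nil_eq, Option.some.injEq, Prod.mk.injEq] at ha hb
    omega
  | [], k :: rest => exact ⟨List.nil_prefix, List.cons_ne_nil _ _ |>.symm⟩
  | k :: rest, [] =>
    obtain ⟨oa', ca', hfa, rfl, rfl⟩ := tpos_node_cons ha
    simp only [tpos_nil_eq, pstr_node_length, Option.some.injEq, Prod.mk.injEq] at hb
    have := (fpos_spec (true, lbl) hfa).2.1
    omega
  | k :: ra, k' :: rb =>
    obtain ⟨oa', ca', hfa, rfl, rfl⟩ := tpos_node_cons ha
    obtain ⟨ob', cb', hfb, rfl, rfl⟩ := tpos_node_cons hb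
    exact fpos_prefix_of_nested hfa hfb (by omega)

theorem fpos_prefix_of_nested {ts : List (LTree β)} {a b : List ℕ} {oa ca ob cb : ℕ}
    (ha : fpos ts a = some (oa, ca)) (hb : fpos ts b = some (ob, cb))
    (h : oa < ob ∧ ob < ca ∨ oa < cb ∧ cb < ca) : a <+: b ∧ a ≠ b := by
  match ts, a, b with
  | t :: ts, 0 :: ra, 0 :: rb =>
    obtain ⟨hab, hne⟩ := tpos_prefix_of_nested ha hb h
    exact ⟨List.cons_prefix_cons.2 ⟨rfl, hab⟩, by simpa using hne⟩
  | t :: ts, 0 :: ra, (k' + 1) :: rb =>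
    obtain ⟨ob', cb', hfb, rfl, rfl⟩ := fpos_cons_succ hb
    obtain ⟨_, _, -⟩ := tpos_spec (true, treeLabel t) ha
    omega
  | t :: ts, (k + 1) :: ra, 0 :: rb =>
    obtain ⟨oa', ca', hfa, rfl, rfl⟩ := fpos_cons_succ ha
    obtain ⟨_, _, -⟩ := tpos_spec (true, treeLabel t) hb
    omega
  | t :: ts, (k + 1) :: ra, (k' + 1) :: rb =>
    obtain ⟨oa', ca', hfa, rfl, rfl⟩ := fpos_cons_succ ha
    obtain ⟨ob', cb', hfb, rfl, rfl⟩ := fpos_cons_succ hb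
    obtain ⟨hab, hne⟩ := fpos_prefix_of_nested hfa hfb (by omega)
    obtain ⟨hk, hab⟩ := List.cons_prefix_cons.1 hab
    exact ⟨List.cons_prefix_cons.2 ⟨by omega, hab⟩, by simpa using hne⟩
  | [], _, _ => simp [fpos] at ha
  | _ :: _, [], _ => simp [fpos] at ha
  | _ :: _, _, [] => simp [fpos] at hb

end

theorem fpos_prefix_of_paren_mem_Ioo {ts : List (LTree β)} {a b : List ℕ} {pa pb : ℕ × ℕ}
    (ha : fpos ts a = some pa) (hb : fpos ts b = some pb) (c : Bool)
    (h : paren c pb ∈ Set.Ioo pa.1 pa.2) : a <+: b ∧ a ≠ b := by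
  cases c
  · exact fpos_prefix_of_nested ha hb (Or.inr h)
  · exact fpos_prefix_of_nested ha hb (Or.inl h)

end Nesting

section Alignment

variable {M : List (ℕ × ℕ)}

def AlignedWith (s : Bool) (M : List (ℕ × ℕ)) (x y : ℕ) : Prop :=
  if s then (x, y) ∈ M else (y, x) ∈ M

theorem alignedAt_iff {s : Bool} {x : ℕ} : AlignedAt s M x ↔ ∃ y, AlignedWith s M x y := by
  cases s <;> rfl

theorem alignedWith_not {s : Bool} {x y : ℕ} : AlignedWith (!s) M x y ↔ AlignedWith s M y x := by
  cases s <;> rfl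

theorem IsMatching.lt_iff_lt (hM : IsMatching M) {p q : ℕ × ℕ} (hp : p ∈ M) (hq : q ∈ M) :
    p.1 < q.1 ↔ p.2 < q.2 := by
  let R : ℕ × ℕ → ℕ × ℕ → Prop := fun p q => p.1 < q.1 ∧ p.2 < q.2
  have : Trans R R R := ⟨fun h h' => ⟨h.1.trans h'.1, h.2.trans h'.2⟩⟩
  have hP : M.Pairwise R := List.isChain_iff_pairwise.1 hM
  refine List.Pairwise.forall_of_forall_of_flip (R := fun p q : ℕ × ℕ => p.1 < q.1 ↔ p.2 < q.2)
    (fun _ _ => iff_of_false (lt_irrefl _) (lt_irrefl _)) (hP.imp ?_) (hP.imp ?_) hp hq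
  · exact fun h => iff_of_true h.1 h.2
  · exact fun h => iff_of_false (not_lt.2 h.1.le) (not_lt.2 h.2.le)

theorem IsMatching.lt_iff_lt_of_alignedWith (hM : IsMatching M) {s : Bool} {x y x' y' : ℕ}
    (h : AlignedWith s M x y) (h' : AlignedWith s M x' y') : x < x' ↔ y < y' := by
  cases s
  · exact (hM.lt_iff_lt h h').symm
  · exact hM.lt_iff_lt h h'

theorem IsMatching.mem_Ioo_of_alignedWith (hM : IsMatching M) {s b : Bool}
    {pt pu pw : ℕ × ℕ} {q : ℕ} (htw : pt.1 < pw.1 ∧ pw.2 < pt.2) (hw : pw.1 < pw.2)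
    (htu : AlignedWith s M (paren b pt) (paren b pu))
    (hwu : AlignedWith s M (paren (!b) pw) (paren (!b) pu))
    (hwq : AlignedWith s M (paren b pw) q) : q ∈ Set.Ioo pu.1 pu.2 := by
  rw [Set.mem_Ioo]
  have := hM.lt_iff_lt_of_alignedWith htu hwq
  have := hM.lt_iff_lt_of_alignedWith hwq hwu
  have := hM.lt_iff_lt_of_alignedWith hwu hwq
  have := hM.lt_iff_lt_of_alignedWith hwq htu
  cases b <;> simp only [paren_true, paren_false, Bool.not_true, Bool.not_false] at * <;> omega

end Alignment

section Chains

variable {β : Type} {HF HG : List (LTree β)} {M : List (ℕ × ℕ)} {d : Bool × β}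

-- `AncestorCond` and the alternation clause of `ExtChainCore` are `StepRel 2` and `StepRel 1`.
def StepRel (m : ℕ) (R : Entry → Entry → Prop) (C : List Entry) : Prop :=
  ∀ k, k + m < C.length → R (C.getD k d0) (C.getD (k + m) d0)

theorem StepRel.append_singleton {m : ℕ} {R : Entry → Entry → Prop} {C : List Entry}
    {v : Entry} (h : StepRel m R C) (hm : 0 < m) (hmC : m ≤ C.length)
    (hv : R (C.getD (C.length - m) d0) v) : StepRel m R (C ++ [v]) := by
  intro k hk
  rw [List.length_append, List.length_singleton] at hk
  rw [List.getD_append _ _ _ _ (by omega)]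
  rcases Nat.lt_or_ge (k + m) C.length with hkm | hkm
  · rw [List.getD_append _ _ _ _ hkm]
    exact h k hkm
  · obtain rfl : k = C.length - m := by omega
    rw [Nat.sub_add_cancel hmC, List.getD_append_right _ _ _ _ le_rfl]
    simpa using hv

theorem StepRel.getD {m : ℕ} {R : Entry → Entry → Prop} {C : List Entry} (h : StepRel m R C)
    {i j : ℕ} (hij : i + m = j) (hj : j < C.length) : R (C.getD i d0) (C.getD j d0) :=
  hij ▸ h i (hij ▸ hj)

def ChainCond (HF HG : List (LTree β)) (M : List (ℕ × ℕ)) (d : Bool × β) (op : Bool)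
    (C : List Entry) : Prop :=
  if op then OpeningChainCond HF HG M d C else ClosingChainCond HF HG M d C

theorem openingChainCond_or_closingChainCond_iff {C : List Entry} :
    OpeningChainCond HF HG M d C ∨ ClosingChainCond HF HG M d C ↔
      ∃ op, ChainCond HF HG M d op C := by
  constructor
  · rintro (h | h)
    exacts [⟨true, h⟩, ⟨false, h⟩]
  · rintro ⟨_ | _, h⟩
    exacts [Or.inr h, Or.inl h]

theorem chainCond_iff {op : Bool} {C : List Entry} :
    ChainCond HF HG M d op C ↔ ∀ k, k < C.length → (C.getD k d0).1 = true →
      (k + 1 < C.length → MatchedEq HF HG M d (paren op (posOf HF HG (C.getD k d0)))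
        (paren op (posOf HF HG (C.getD (k + 1) d0)))) ∧
      (0 < k → MatchedEq HF HG M d (paren (!op) (posOf HF HG (C.getD k d0)))
        (paren (!op) (posOf HF HG (C.getD (k - 1) d0)))) := by
  cases op <;> rfl

theorem matchedEq_iff (hEq : ∀ p ∈ M, (pforest HF).getD p.1 d = (pforest HG).getD p.2 d)
    {i j : ℕ} : MatchedEq HF HG M d i j ↔ (i, j) ∈ M :=
  ⟨And.left, fun h => ⟨h, hEq _ h⟩⟩

/-- Consecutive nodes `e, e'` of an opening chain (`op = true`) are aligned through their opening
parentheses when `e` lies in `F` and through their closing ones when `e` lies in `G`; a closing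
chain (`op = false`) uses the other parentheses. -/
def ChainLink (HF HG : List (LTree β)) (M : List (ℕ × ℕ)) (op : Bool) (e e' : Entry) : Prop :=
  AlignedWith e.1 M (paren (op == e.1) (posOf HF HG e)) (paren (op == e.1) (posOf HF HG e'))

theorem chainLink_iff_of_fst_true {op : Bool} {e e' : Entry} (he : e.1 = true) :
    ChainLink HF HG M op e e' ↔ (paren op (posOf HF HG e), paren op (posOf HF HG e')) ∈ M := by
  simp [ChainLink, AlignedWith, he]

theorem chainLink_iff_of_fst_false {op : Bool} {e e' : Entry} (he : e.1 = false) :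
    ChainLink HF HG M op e e' ↔
      (paren (!op) (posOf HF HG e'), paren (!op) (posOf HF HG e)) ∈ M := by
  simp [ChainLink, AlignedWith, he]

theorem chainCond_iff_stepRel
    (hEq : ∀ p ∈ M, (pforest HF).getD p.1 d = (pforest HG).getD p.2 d)
    {op : Bool} {C : List Entry} (halt : StepRel 1 (fun e e' => e.1 ≠ e'.1) C) :
    ChainCond HF HG M d op C ↔ StepRel 1 (ChainLink HF HG M op) C := by
  simp only [chainCond_iff, matchedEq_iff hEq]
  constructor
  · intro h k hk
    cases hs : (C.getD k d0).1
    · have hs' : (C.getD (k + 1) d0).1 = true := by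
        rw [Bool.eq_not_of_ne (halt k hk).symm, hs]; rfl
      rw [chainLink_iff_of_fst_false hs]
      exact (h (k + 1) hk hs').2 k.succ_pos
    · rw [chainLink_iff_of_fst_true hs]
      exact (h k (by omega) hs).1 hk
  · intro h k hk hs
    refine ⟨fun hk' => (chainLink_iff_of_fst_true hs).1 (h k hk'), fun hk0 => ?_⟩
    obtain ⟨k, rfl⟩ := Nat.exists_eq_succ_of_ne_zero hk0.ne'
    have hs' : (C.getD k d0).1 = false := by
      rw [Bool.eq_not_of_ne (halt k (by omega)), hs]; rfl
    exact (chainLink_iff_of_fst_false hs').1 (h k (by omega))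

theorem ChainCore.append_singleton
    (hEq : ∀ p ∈ M, (pforest HF).getD p.1 d = (pforest HG).getD p.2 d)
    {C : List Entry} (hC : ChainCore HF HG M d C) {op : Bool} (hop : ChainCond HF HG M d op C)
    {v : Entry} (hv : (fpos (if v.1 then HF else HG) v.2).isSome)
    (hside : (C.getD (C.length - 1) d0).1 ≠ v.1)
    (hanc : (C.getD (C.length - 2) d0).2 <+: v.2 ∧ (C.getD (C.length - 2) d0).2 ≠ v.2)
    (hlink : ChainLink HF HG M op (C.getD (C.length - 1) d0) v) :
    ChainCore HF HG M d (C ++ [v]) := by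
  obtain ⟨⟨hlen, hval, halt, -⟩, hancC⟩ := hC
  have halt' : StepRel 1 (fun e e' => e.1 ≠ e'.1) (C ++ [v]) :=
    StepRel.append_singleton halt one_pos (by omega) hside
  have hop' : ChainCond HF HG M d op (C ++ [v]) :=
    (chainCond_iff_stepRel hEq halt').2
      (((chainCond_iff_stepRel hEq halt).1 hop).append_singleton one_pos (by omega) hlink)
  refine ⟨⟨by simp; omega, ?_, halt', ?_⟩,
    StepRel.append_singleton (R := fun e e' => e.2 <+: e'.2 ∧ e.2 ≠ e'.2) hancC two_pos
      (by omega) hanc⟩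
  · intro e he
    rcases List.mem_append.1 he with he | he
    · exact hval e he
    · rwa [List.mem_singleton.1 he]
  · exact openingChainCond_or_closingChainCond_iff.2 ⟨op, hop'⟩

theorem ChainCore.fpos_getD {C : List Entry} (hC : ChainCore HF HG M d C) {k : ℕ}
    (hk : k < C.length) :
    fpos (if (C.getD k d0).1 then HF else HG) (C.getD k d0).2 =
      some (posOf HF HG (C.getD k d0)) := by
  rw [List.getD_eq_getElem _ _ hk]
  obtain ⟨p, hp⟩ := Option.isSome_iff_exists.1 (hC.1.2.1 _ (List.getElem_mem hk))
  simp only [posOf, hp, Option.getD_some]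

theorem ChainCore.last_three
    (hEq : ∀ p ∈ M, (pforest HF).getD p.1 d = (pforest HG).getD p.2 d)
    {C : List Entry} (hC : ChainCore HF HG M d C) {op : Bool} (hop : ChainCond HF HG M d op C)
    {t u w : Entry} (ht : C.getD (C.length - 3) d0 = t) (hu : C.getD (C.length - 2) d0 = u)
    (hw : C.getD (C.length - 1) d0 = w) :
    t.1 = w.1 ∧ u.1 = !w.1 ∧ (t.2 <+: w.2 ∧ t.2 ≠ w.2) ∧
      ChainLink HF HG M op t u ∧ ChainLink HF HG M op u w := by
  have hlen : 3 ≤ C.length := hC.1.1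
  have halt : StepRel 1 (fun e e' => e.1 ≠ e'.1) C := hC.1.2.2.1
  have hanc : StepRel 2 (fun e e' => e.2 <+: e'.2 ∧ e.2 ≠ e'.2) C := hC.2
  have hlink := (chainCond_iff_stepRel hEq halt).1 hop
  subst ht hu hw
  have hu : (C.getD (C.length - 2) d0).1 = !(C.getD (C.length - 1) d0).1 :=
    Bool.eq_not_of_ne (halt.getD (by omega) (by omega))
  refine ⟨?_, hu, hanc.getD (by omega) (by omega), hlink.getD (by omega) (by omega),
    hlink.getD (by omega) (by omega)⟩
  rw [Bool.eq_not_of_ne (halt.getD (j := C.length - 2) (by omega) (by omega)), hu,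
    Bool.not_not]

end Chains

section LastNode

variable {β : Type} {HF HG : List (LTree β)} {M : List (ℕ × ℕ)} {d : Bool × β}

def PartiallyDeleted (HF HG : List (LTree β)) (M : List (ℕ × ℕ)) (e : Entry) : Prop :=
  (AlignedAt e.1 M (posOf HF HG e).1 ∧ ¬ AlignedAt e.1 M (posOf HF HG e).2) ∨
    (¬ AlignedAt e.1 M (posOf HF HG e).1 ∧ AlignedAt e.1 M (posOf HF HG e).2)

theorem partiallyDeleted_of_alignedAt_paren {e : Entry} (b : Bool)
    (h : AlignedAt e.1 M (paren b (posOf HF HG e)))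
    (h' : ¬ AlignedAt e.1 M (paren (!b) (posOf HF HG e))) : PartiallyDeleted HF HG M e := by
  cases b
  · exact Or.inr ⟨h', h⟩
  · exact Or.inl ⟨h, h'⟩

theorem exists_fpos_paren_of_alignedWith
    (hB : ∀ p ∈ M, p.1 < (pforest HF).length ∧ p.2 < (pforest HG).length)
    (hEq : ∀ p ∈ M, (pforest HF).getD p.1 d = (pforest HG).getD p.2 d)
    {s : Bool} {x q : ℕ} (h : AlignedWith s M x q) :
    ∃ a p, fpos (if !s then HF else HG) a = some p ∧
      paren ((pforest (if s then HF else HG)).getD x d).1 p = q := by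
  cases s
  · obtain ⟨a, p, hp, hq⟩ := exists_fpos_paren HF d (hB _ h).1
    rw [hEq _ h] at hq
    exact ⟨a, p, hp, hq⟩
  · obtain ⟨a, p, hp, hq⟩ := exists_fpos_paren HG d (hB _ h).2
    rw [← hEq _ h] at hq
    exact ⟨a, p, hp, hq⟩

theorem chainLink_iff_of_fst_eq {op s : Bool} {e e' : Entry} (he : e.1 = s) :
    ChainLink HF HG M op e e' ↔
      AlignedWith s M (paren (op == s) (posOf HF HG e)) (paren (op == s) (posOf HF HG e')) := by
  rw [ChainLink, he]

theorem chainLink_iff_of_fst_eq_not {op s : Bool} {e e' : Entry} (he : e.1 = !s) :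
    ChainLink HF HG M op e e' ↔ AlignedWith s M (paren (!(op == s)) (posOf HF HG e'))
      (paren (!(op == s)) (posOf HF HG e)) := by
  rw [chainLink_iff_of_fst_eq he, ← alignedWith_not]
  cases op <;> cases s <;> rfl

theorem MaxChain.partiallyDeleted_last (hM : IsMatching M)
    (hB : ∀ p ∈ M, p.1 < (pforest HF).length ∧ p.2 < (pforest HG).length)
    (hEq : ∀ p ∈ M, (pforest HF).getD p.1 d = (pforest HG).getD p.2 d)
    {C : List Entry} (hC : MaxChain HF HG M d C) :
    PartiallyDeleted HF HG M (C.getD (C.length - 1) d0) := by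
  obtain ⟨hcore, hmax, -⟩ := hC
  have hlen : 3 ≤ C.length := hcore.1.1
  obtain ⟨op, hop⟩ := openingChainCond_or_closingChainCond_iff.1 hcore.1.2.2.2
  set t := C.getD (C.length - 3) d0
  set u := C.getD (C.length - 2) d0
  set w := C.getD (C.length - 1) d0
  obtain ⟨s, hs⟩ : ∃ s, w.1 = s := ⟨_, rfl⟩
  obtain ⟨ht, hu, htw, htu, huw⟩ := hcore.last_three hEq hop rfl rfl rfl
  rw [hs] at ht hu
  have hft : fpos (if s then HF else HG) t.2 = some (posOf HF HG t) :=
    ht ▸ hcore.fpos_getD (by omega)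
  have hfu : fpos (if !s then HF else HG) u.2 = some (posOf HF HG u) :=
    hu ▸ hcore.fpos_getD (by omega)
  have hfw : fpos (if s then HF else HG) w.2 = some (posOf HF HG w) :=
    hs ▸ hcore.fpos_getD (by omega)
  rw [chainLink_iff_of_fst_eq ht] at htu
  rw [chainLink_iff_of_fst_eq_not hu] at huw
  refine partiallyDeleted_of_alignedAt_paren (!(op == s)) ?_ ?_
  · rw [hs]
    exact alignedAt_iff.2 ⟨_, huw⟩
  rw [hs, Bool.not_not, alignedAt_iff]
  rintro ⟨q, hq⟩
  obtain ⟨a, pv, hfv, rfl⟩ := exists_fpos_paren_of_alignedWith hB hEq hq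
  rw [fpos_getD_paren d hfw] at hq
  have hin := hM.mem_Ioo_of_alignedWith (fpos_lt_of_prefix hft hfw htw.1 htw.2)
    (fpos_spec d hfw).1 htu huw hq
  have huv := fpos_prefix_of_paren_mem_Ioo hfu hfv _ hin
  have hposv : posOf HF HG (!s, a) = pv := by simp only [posOf, hfv, Option.getD_some]
  refine hmax ⟨(!s, a), hcore.append_singleton hEq hop (Option.isSome_iff_exists.2 ⟨pv, hfv⟩)
    (hs.trans_ne s.self_ne_not) huv ((chainLink_iff_of_fst_eq hs).2 ?_)⟩
  rwa [hposv]

end LastNode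

/-- Every chain `C` with respect to a (deletion-only) alignment between
`P_hld(F)` and `P_hld(G)` is finite (it is a list), and its last node
`C[|C|-1]` is partially deleted: exactly one of its opening and closing
parentheses is aligned, and the other one is deleted. -/
theorem stmt14 {α : Type} (F G : List (LTree α)) (M : List (ℕ × ℕ))
    (C : List Entry)
    (hM : IsMatching M)
    (hB : ∀ p ∈ M, p.1 < (pforest (hldForest F)).length ∧
        p.2 < (pforest (hldForest G)).length)
    (hEq : ∀ p ∈ M,
        (pforest (hldForest F)).getD p.1 (hldDflt α) =
          (pforest (hldForest G)).getD p.2 (hldDflt α))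
    (hC : MaxChain (hldForest F) (hldForest G) M (hldDflt α) C) :
    (AlignedAt (C.getD (C.length - 1) d0).1 M
        (posOf (hldForest F) (hldForest G) (C.getD (C.length - 1) d0)).1 ∧
      ¬ AlignedAt (C.getD (C.length - 1) d0).1 M
        (posOf (hldForest F) (hldForest G) (C.getD (C.length - 1) d0)).2) ∨
    (¬ AlignedAt (C.getD (C.length - 1) d0).1 M
        (posOf (hldForest F) (hldForest G) (C.getD (C.length - 1) d0)).1 ∧
      AlignedAt (C.getD (C.length - 1) d0).1 M
        (posOf (hldForest F) (hldForest G) (C.getD (C.length - 1) d0)).2) :=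
  hC.partiallyDeleted_last hM hB hEq
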